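/- arXiv:1501.06695 — 7 statements merged into one kernel-verified Lean document; each statement's English description precedes it below -/
import Mathlib

section
/- Let L(λ) be the 2×2 matrix with entries L11 = p2/2 + p1*q1/(2λ), L12 = λ - 2*q2 - q1^2/λ, L21 = a*λ^2 + 2*a*q2*λ + a*(q1^2 + 4*q2^2) + p1^2/(4λ), L22 = -L11. Then for all nonzero λ and all μ, det(L(λ) - μ·Id) = μ^2 - a*λ^3 - H1/4 + H2/λ, where H1 = p1^2 + p2^2 - 16*a*q2*(q1^2 + 2*q2^2) and H2 = a*q1^2*(q1^2 + 4*q2^2) + p1*(q2*p1 - q1*p2)/2. -/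
theorem Matrix.det_traceless_fin_two_sub_smul_one {R : Type*} [CommRing R] (x y z μ : R) :
    (!![x, y; z, -x] - μ • (1 : Matrix (Fin 2) (Fin 2) R)).det = μ ^ 2 - (x ^ 2 + y * z) := by
  simp only [Matrix.det_fin_two, Matrix.sub_apply, Matrix.smul_apply, Matrix.of_apply,
    Matrix.cons_val', Matrix.cons_val_zero, Matrix.cons_val_one, Matrix.cons_val_fin_one,
    Matrix.one_apply_eq, Matrix.one_apply_ne zero_ne_one, Matrix.one_apply_ne one_ne_zero,
    smul_eq_mul]
  ring

theorem henon_heiles_lax_charpoly (a q1 q2 p1 p2 lam mu : ℝ) (hl : lam ≠ 0) :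
    let L : Matrix (Fin 2) (Fin 2) ℝ :=
      !![p2 / 2 + p1 * q1 / (2 * lam), lam - 2 * q2 - q1^2 / lam;
         a * lam^2 + 2 * a * q2 * lam + a * (q1^2 + 4 * q2^2) + p1^2 / (4 * lam),
         -(p2 / 2 + p1 * q1 / (2 * lam))]
    let H1 : ℝ := p1^2 + p2^2 - 16 * a * q2 * (q1^2 + 2 * q2^2)
    let H2 : ℝ := a * q1^2 * (q1^2 + 4 * q2^2) + p1 * (q2 * p1 - q1 * p2) / 2
    (L - mu • (1 : Matrix (Fin 2) (Fin 2) ℝ)).det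
      = mu^2 - a * lam^3 - H1 / 4 + H2 / lam := by
  intro L H1 H2
  rw [Matrix.det_traceless_fin_two_sub_smul_one]
  field_simp
  ring
end

section
/- Let H1 = p1^2 + p2^2 - 16*a*q2*(q1^2 + 2*q2^2) and H2 = a*q1^2*(q1^2 + 4*q2^2) + p1*(q2*p1 - q1*p2)/2 on R^4 with coordinates (q1, q2, p1, p2). Then the canonical Poisson bracket {H1, H2} vanishes identically. -/
/-- Canonical Poisson bracket on `ℝ⁴` with coordinates `(x₁, x₂, p₁, p₂)`. -/
noncomputable def pb (f g : ℝ → ℝ → ℝ → ℝ → ℝ) (x1 x2 p1 p2 : ℝ) : ℝ :=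
    deriv (fun t => f t x2 p1 p2) x1 * deriv (fun t => g x1 x2 t p2) p1
  + deriv (fun t => f x1 t p1 p2) x2 * deriv (fun t => g x1 x2 p1 t) p2
  - deriv (fun t => f x1 x2 t p2) p1 * deriv (fun t => g t x2 p1 p2) x1
  - deriv (fun t => f x1 x2 p1 t) p2 * deriv (fun t => g x1 t p1 p2) x2

theorem pb_eq_of_hasDerivAt {f g : ℝ → ℝ → ℝ → ℝ → ℝ}
    {x1 x2 p1 p2 f₁ f₂ f₃ f₄ g₁ g₂ g₃ g₄ : ℝ}
    (hf₁ : HasDerivAt (fun t => f t x2 p1 p2) f₁ x1)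
    (hf₂ : HasDerivAt (fun t => f x1 t p1 p2) f₂ x2)
    (hf₃ : HasDerivAt (fun t => f x1 x2 t p2) f₃ p1)
    (hf₄ : HasDerivAt (fun t => f x1 x2 p1 t) f₄ p2)
    (hg₁ : HasDerivAt (fun t => g t x2 p1 p2) g₁ x1)
    (hg₂ : HasDerivAt (fun t => g x1 t p1 p2) g₂ x2)
    (hg₃ : HasDerivAt (fun t => g x1 x2 t p2) g₃ p1)
    (hg₄ : HasDerivAt (fun t => g x1 x2 p1 t) g₄ p2) :
    pb f g x1 x2 p1 p2 = f₁ * g₃ + f₂ * g₄ - f₃ * g₁ - f₄ * g₂ := by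
  rw [pb, hf₁.deriv, hf₂.deriv, hf₃.deriv, hf₄.deriv,
    hg₁.deriv, hg₂.deriv, hg₃.deriv, hg₄.deriv]

namespace HenonHeiles

noncomputable def hamiltonian (a q1 q2 p1 p2 : ℝ) : ℝ :=
  p1^2 + p2^2 - 16 * a * q2 * (q1^2 + 2 * q2^2)

noncomputable def secondIntegral (a q1 q2 p1 p2 : ℝ) : ℝ :=
  a * q1^2 * (q1^2 + 4 * q2^2) + p1 * (q2 * p1 - q1 * p2) / 2

variable (a q1 q2 p1 p2 : ℝ)

theorem hasDerivAt_hamiltonian_q1 :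
    HasDerivAt (fun t => hamiltonian a t q2 p1 p2) (-32 * a * q1 * q2) q1 :=
  ((((hasDerivAt_pow 2 q1).add_const (2 * q2 ^ 2)).const_mul (16 * a * q2)).const_sub
    (p1 ^ 2 + p2 ^ 2)).congr_deriv (by ring)

theorem hasDerivAt_hamiltonian_q2 :
    HasDerivAt (fun t => hamiltonian a q1 t p1 p2) (-16 * a * (q1 ^ 2 + 6 * q2 ^ 2)) q2 :=
  ((((hasDerivAt_id' q2).const_mul (16 * a)).mul
    (((hasDerivAt_pow 2 q2).const_mul 2).const_add (q1 ^ 2))).const_sub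
    (p1 ^ 2 + p2 ^ 2)).congr_deriv (by ring)

theorem hasDerivAt_hamiltonian_p1 :
    HasDerivAt (fun t => hamiltonian a q1 q2 t p2) (2 * p1) p1 :=
  (((hasDerivAt_pow 2 p1).add_const (p2 ^ 2)).sub_const _).congr_deriv (by ring)

theorem hasDerivAt_hamiltonian_p2 :
    HasDerivAt (fun t => hamiltonian a q1 q2 p1 t) (2 * p2) p2 :=
  (((hasDerivAt_pow 2 p2).const_add (p1 ^ 2)).sub_const _).congr_deriv (by ring)

theorem hasDerivAt_secondIntegral_q1 :
    HasDerivAt (fun t => secondIntegral a t q2 p1 p2)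
      (4 * a * q1 ^ 3 + 8 * a * q1 * q2 ^ 2 - p1 * p2 / 2) q1 :=
  ((((hasDerivAt_pow 2 q1).const_mul a).mul ((hasDerivAt_pow 2 q1).add_const (4 * q2 ^ 2))).add
    (((((hasDerivAt_id' q1).mul_const p2).const_sub (q2 * p1)).const_mul p1).div_const
      2)).congr_deriv (by ring)

theorem hasDerivAt_secondIntegral_q2 :
    HasDerivAt (fun t => secondIntegral a q1 t p1 p2) (8 * a * q1 ^ 2 * q2 + p1 ^ 2 / 2) q2 :=
  (((((hasDerivAt_pow 2 q2).const_mul 4).const_add (q1 ^ 2)).const_mul (a * q1 ^ 2)).add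
    (((((hasDerivAt_id' q2).mul_const p1).sub_const (q1 * p2)).const_mul p1).div_const
      2)).congr_deriv (by ring)

theorem hasDerivAt_secondIntegral_p1 :
    HasDerivAt (fun t => secondIntegral a q1 q2 t p2) (q2 * p1 - q1 * p2 / 2) p1 :=
  ((((hasDerivAt_id' p1).mul (((hasDerivAt_id' p1).const_mul q2).sub_const (q1 * p2))).div_const
    2).const_add (a * q1 ^ 2 * (q1 ^ 2 + 4 * q2 ^ 2))).congr_deriv (by ring)

theorem hasDerivAt_secondIntegral_p2 :
    HasDerivAt (fun t => secondIntegral a q1 q2 p1 t) (-(q1 * p1) / 2) p2 :=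
  ((((((hasDerivAt_id' p2).const_mul q1).const_sub (q2 * p1)).const_mul p1).div_const 2).const_add
    (a * q1 ^ 2 * (q1 ^ 2 + 4 * q2 ^ 2))).congr_deriv (by ring)

end HenonHeiles

theorem henon_heiles_1_involution (a : ℝ) (q1 q2 p1 p2 : ℝ) :
    pb (fun q1 q2 p1 p2 => p1^2 + p2^2 - 16 * a * q2 * (q1^2 + 2 * q2^2))
       (fun q1 q2 p1 p2 => a * q1^2 * (q1^2 + 4 * q2^2) + p1 * (q2 * p1 - q1 * p2) / 2)
       q1 q2 p1 p2 = 0 := by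
  change pb (HenonHeiles.hamiltonian a) (HenonHeiles.secondIntegral a) q1 q2 p1 p2 = 0
  rw [pb_eq_of_hasDerivAt
    (HenonHeiles.hasDerivAt_hamiltonian_q1 ..) (HenonHeiles.hasDerivAt_hamiltonian_q2 ..)
    (HenonHeiles.hasDerivAt_hamiltonian_p1 ..) (HenonHeiles.hasDerivAt_hamiltonian_p2 ..)
    (HenonHeiles.hasDerivAt_secondIntegral_q1 ..) (HenonHeiles.hasDerivAt_secondIntegral_q2 ..)
    (HenonHeiles.hasDerivAt_secondIntegral_p1 ..) (HenonHeiles.hasDerivAt_secondIntegral_p2 ..)]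
  ring
end

section
/- Let L(λ) be the Lax matrix of the first Hénon-Heiles system with entries L11 = p2/2 + p1*q1/(2λ), L12 = λ - 2*q2 - q1^2/λ, L21 = a*λ^2 + 2*a*q2*λ + a*(q1^2 + 4*q2^2) + p1^2/(4λ), L22 = -L11, and let f(λ) = p2/2 + p1*(λ - 2*q2)/(2*q1). Then for all λ for which L12(λ) ≠ 0 and q1 ≠ 0, the rational expression 4*L21(λ) + 4*(L11(λ)^2 - f(λ)^2)/L12(λ) equals the quadratic polynomial 4*a*λ^2 + ((8*a*q1^2*q2 - p1^2)/q1^2)*λ + 4*a*(q1^2 + 4*q2^2) + 2*p1*(p1*q2 - p2*q1)/q1^2. -/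
/-!
The function `f` is chosen so that `L₁₁ - f = -(p₁ / (2 q₁)) L₁₂`. Hence `L₁₂` divides
`L₁₁² - f² = (L₁₁ - f)(L₁₁ + f)` exactly, and the quotient `-(p₁ / (2 q₁))(L₁₁ + f)` has a pole
`-p₁² / (4 λ)` at `λ = 0` which cancels the one of `L₂₁`.
-/

namespace HenonHeiles

variable (a q1 q2 p1 p2 lam : ℝ)

noncomputable def laxL11 : ℝ := p2 / 2 + p1 * q1 / (2 * lam)

noncomputable def laxL12 : ℝ := lam - 2 * q2 - q1 ^ 2 / lam

noncomputable def laxL21 : ℝ := a * lam ^ 2 + 2 * a * q2 * lam + a * (q1 ^ 2 + 4 * q2 ^ 2) + p1 ^ 2 / (4 * lam)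

noncomputable def gaugeF : ℝ := p2 / 2 + p1 * (lam - 2 * q2) / (2 * q1)

theorem sq_sub_sq_div_eq_of_sub_eq_mul {K : Type*} [Field K] {x y c d : K}
    (hxy : x - y = c * d) (hd : d ≠ 0) : (x ^ 2 - y ^ 2) / d = c * (x + y) := by
  rw [show x ^ 2 - y ^ 2 = (x - y) * (x + y) by ring, hxy, mul_right_comm, mul_div_cancel_right₀ _ hd]

variable {q1} in
theorem laxL11_sub_gaugeF (hq : q1 ≠ 0) :
    laxL11 q1 p1 p2 lam - gaugeF q1 q2 p1 p2 lam = -(p1 / (2 * q1)) * laxL12 q1 q2 lam := by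
  unfold laxL11 gaugeF laxL12
  field_simp
  ring

variable {q1} in
theorem four_laxL21_sub_mul_laxL11_add_gaugeF (hq : q1 ≠ 0) :
    4 * laxL21 a q1 q2 p1 lam - 2 * p1 / q1 * (laxL11 q1 p1 p2 lam + gaugeF q1 q2 p1 p2 lam)
      = 4 * a * lam ^ 2 + ((8 * a * q1 ^ 2 * q2 - p1 ^ 2) / q1 ^ 2) * lam
        + 4 * a * (q1 ^ 2 + 4 * q2 ^ 2) + 2 * p1 * (p1 * q2 - p2 * q1) / q1 ^ 2 := by
  unfold laxL21 laxL11 gaugeF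
  field_simp
  ring

end HenonHeiles

open HenonHeiles in
theorem transformed_lax_entry_is_polynomial_general (a q1 q2 p1 p2 lam : ℝ)
    (hq : q1 ≠ 0)
    (hL12 : lam - 2 * q2 - q1^2 / lam ≠ 0) :
    let L11 := p2 / 2 + p1 * q1 / (2 * lam)
    let L12 := lam - 2 * q2 - q1^2 / lam
    let L21 := a * lam^2 + 2 * a * q2 * lam + a * (q1^2 + 4 * q2^2) + p1^2 / (4 * lam)
    let f := p2 / 2 + p1 * (lam - 2 * q2) / (2 * q1)
    4 * L21 + 4 * (L11^2 - f^2) / L12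
      = 4 * a * lam^2 + ((8 * a * q1^2 * q2 - p1^2) / q1^2) * lam
        + 4 * a * (q1^2 + 4 * q2^2) + 2 * p1 * (p1 * q2 - p2 * q1) / q1^2 := by
  show 4 * laxL21 a q1 q2 p1 lam
      + 4 * (laxL11 q1 p1 p2 lam ^ 2 - gaugeF q1 q2 p1 p2 lam ^ 2) / laxL12 q1 q2 lam = _
  rw [mul_div_assoc, sq_sub_sq_div_eq_of_sub_eq_mul (laxL11_sub_gaugeF q2 p1 p2 lam hq) hL12,
    ← four_laxL21_sub_mul_laxL11_add_gaugeF a q2 p1 p2 lam hq]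
  ring

theorem transformed_lax_entry_is_polynomial (a q1 q2 p1 p2 lam : ℝ)
    (hl : lam ≠ 0) (hq : q1 ≠ 0)
    (hL12 : lam - 2 * q2 - q1^2 / lam ≠ 0) :
    let L11 := p2 / 2 + p1 * q1 / (2 * lam)
    let L12 := lam - 2 * q2 - q1^2 / lam
    let L21 := a * lam^2 + 2 * a * q2 * lam + a * (q1^2 + 4 * q2^2) + p1^2 / (4 * lam)
    let f := p2 / 2 + p1 * (lam - 2 * q2) / (2 * q1)
    4 * L21 + 4 * (L11^2 - f^2) / L12
      = 4 * a * lam^2 + ((8 * a * q1^2 * q2 - p1^2) / q1^2) * lam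
        + 4 * a * (q1^2 + 4 * q2^2) + 2 * p1 * (p1 * q2 - p2 * q1) / q1^2 :=
  transformed_lax_entry_is_polynomial_general a q1 q2 p1 p2 lam hq hL12
end

section
/- Let L(λ) be the 2×2 matrix with entries L11 = p2/2 + p1*q1/(2λ), L12 = λ - 2*q2 - q1^2/λ, L21 = a*λ^3 + 2*a*q2*λ^2 + a*(q1^2 + 4*q2^2)*λ + 4*a*q2*(q1^2 + 2*q2^2) + p1^2/(4λ), L22 = -L11. Then for all nonzero λ, det(L(λ) - μ·Id) = μ^2 - a*λ^4 - H/4 + G/λ, where H = p1^2 + p2^2 - 4*a*(q1^4 + 12*q1^2*q2^2 + 16*q2^4) and G = 4*a*q1^2*q2*(q1^2 + 2*q2^2) + p1*(q2*p1 - q1*p2)/2. -/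
theorem Matrix.det_sub_smul_one_of_trace_eq_zero {R : Type*} [CommRing R]
    (A : Matrix (Fin 2) (Fin 2) R) (hA : A.trace = 0) (μ : R) :
    (A - μ • (1 : Matrix (Fin 2) (Fin 2) R)).det = μ ^ 2 + A.det := by
  rw [Matrix.trace_fin_two] at hA
  simp only [Matrix.det_fin_two, Matrix.sub_apply, Matrix.smul_apply, Matrix.one_apply_eq,
    Matrix.one_apply_ne zero_ne_one, Matrix.one_apply_ne one_ne_zero, smul_eq_mul]
  linear_combination (-μ) * hA

theorem system_1_12_16_lax_charpoly (a q1 q2 p1 p2 lam mu : ℝ) (hl : lam ≠ 0) :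
    let L : Matrix (Fin 2) (Fin 2) ℝ :=
      !![p2 / 2 + p1 * q1 / (2 * lam), lam - 2 * q2 - q1^2 / lam;
         a * lam^3 + 2 * a * q2 * lam^2 + a * (q1^2 + 4 * q2^2) * lam
           + 4 * a * q2 * (q1^2 + 2 * q2^2) + p1^2 / (4 * lam),
         -(p2 / 2 + p1 * q1 / (2 * lam))]
    let H : ℝ := p1^2 + p2^2 - 4 * a * (q1^4 + 12 * q1^2 * q2^2 + 16 * q2^4)
    let G : ℝ := 4 * a * q1^2 * q2 * (q1^2 + 2 * q2^2) + p1 * (q2 * p1 - q1 * p2) / 2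
    (L - mu • (1 : Matrix (Fin 2) (Fin 2) ℝ)).det
      = mu^2 - a * lam^4 - H / 4 + G / lam := by
  intro L H G
  have hL : L.trace = 0 := by simp [L, Matrix.trace_fin_two]
  have spectral_curve : L.det = -a * lam ^ 4 - H / 4 + G / lam := by
    simp only [L, H, G, Matrix.det_fin_two_of]
    field_simp
    ring
  rw [Matrix.det_sub_smul_one_of_trace_eq_zero L hL, spectral_curve]
  ring
end

section
/- Let H = p1^2 + p2^2 - 4*a*(q1^4 + 12*q1^2*q2^2 + 16*q2^4) and G = 4*a*q1^2*q2*(q1^2 + 2*q2^2) + p1*(q2*p1 - q1*p2)/2 on R^4 with coordinates (q1, q2, p1, p2). Then the canonical Poisson bracket {H, G} vanishes identically. -/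
theorem system_1_12_16_involution (a : ℝ) (q1 q2 p1 p2 : ℝ) :
    pb (fun q1 q2 p1 p2 => p1^2 + p2^2 - 4 * a * (q1^4 + 12 * q1^2 * q2^2 + 16 * q2^4))
       (fun q1 q2 p1 p2 =>
          4 * a * q1^2 * q2 * (q1^2 + 2 * q2^2) + p1 * (q2 * p1 - q1 * p2) / 2)
       q1 q2 p1 p2 = 0 := by
  simp (disch := fun_prop) only [pb, deriv_fun_sub, deriv_fun_add, deriv_fun_mul, deriv_fun_pow,
    deriv_const', deriv_id'', deriv_div_const, deriv_const_mul_id', Nat.cast_ofNat,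
    Nat.add_one_sub_one, pow_one]
  ring
end

section
/- Let a > 0 and set b = sqrt(a). Define on R^4 with coordinates (q1, q2, p1, p2): H̃ = p1^2 + p2^2 - 3*b*p2*q1^2 + 2*a*(q1^4 - 12*q1^2*q2^2 - 32*q2^4) and H̃2 = p1^4 + 4*a^2*q1^4*(q1^4 - 8*q1^2*q2^2 - 112*q2^4) + 4*a*b*q1^3*(64*p1*q2^3 - p2*q1^3 - 12*p2*q1*q2^2) + a*q1^2*(4*p1^2*q1^2 - 48*p1^2*q2^2 + 32*p1*p2*q1*q2 + p2^2*q1^2) - 6*b*p1^2*p2*q1^2. Then the canonical Poisson bracket {H̃, H̃2} vanishes identically. -/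
theorem dp (c0 c1 c2 c3 c4 c5 c6 c7 c8 x : ℝ) :
    deriv (fun t : ℝ => c0 + c1*t^1 + c2*t^2 + c3*t^3 + c4*t^4 + c5*t^5 + c6*t^6 + c7*t^7 + c8*t^8) x
    = c1 + 2*c2*x + 3*c3*x^2 + 4*c4*x^3 + 5*c5*x^4 + 6*c6*x^5 + 7*c7*x^6 + 8*c8*x^7 := by
  have h : HasDerivAt (fun t : ℝ => c0 + c1*t^1 + c2*t^2 + c3*t^3 + c4*t^4 + c5*t^5 + c6*t^6 + c7*t^7 + c8*t^8)
      (0 + c1*(↑(1:ℕ)*x^(1-1)) + c2*(↑(2:ℕ)*x^(2-1)) + c3*(↑(3:ℕ)*x^(3-1)) + c4*(↑(4:ℕ)*x^(4-1))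
        + c5*(↑(5:ℕ)*x^(5-1)) + c6*(↑(6:ℕ)*x^(6-1)) + c7*(↑(7:ℕ)*x^(7-1)) + c8*(↑(8:ℕ)*x^(8-1))) x :=
    ((((((((hasDerivAt_const x c0).add ((hasDerivAt_pow 1 x).const_mul c1)).add
      ((hasDerivAt_pow 2 x).const_mul c2)).add ((hasDerivAt_pow 3 x).const_mul c3)).add
      ((hasDerivAt_pow 4 x).const_mul c4)).add ((hasDerivAt_pow 5 x).const_mul c5)).add
      ((hasDerivAt_pow 6 x).const_mul c6)).add ((hasDerivAt_pow 7 x).const_mul c7)).add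
      ((hasDerivAt_pow 8 x).const_mul c8)
  rw [h.deriv]; push_cast; ring

theorem velocity_dependent_involution (a : ℝ) (ha : 0 < a) (q1 q2 p1 p2 : ℝ) :
    let b := Real.sqrt a
    pb (fun q1 q2 p1 p2 =>
          p1^2 + p2^2 - 3 * b * p2 * q1^2
            + 2 * a * (q1^4 - 12 * q1^2 * q2^2 - 32 * q2^4))
       (fun q1 q2 p1 p2 =>
          p1^4 + 4 * a^2 * q1^4 * (q1^4 - 8 * q1^2 * q2^2 - 112 * q2^4)
            + 4 * a * b * q1^3 * (64 * p1 * q2^3 - p2 * q1^3 - 12 * p2 * q1 * q2^2)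
            + a * q1^2 * (4 * p1^2 * q1^2 - 48 * p1^2 * q2^2
                + 32 * p1 * p2 * q1 * q2 + p2^2 * q1^2)
            - 6 * b * p1^2 * p2 * q1^2)
       q1 q2 p1 p2 = 0 := by
  intro b
  have hb : b^2 = a := Real.sq_sqrt ha.le
  simp only [pb]
  -- ∂H/∂q1
  have h1 : deriv (fun t : ℝ => p1^2 + p2^2 - 3 * b * p2 * t^2
      + 2 * a * (t^4 - 12 * t^2 * q2^2 - 32 * q2^4)) q1
      = 2*(-3*b*p2 - 24*a*q2^2)*q1 + 4*(2*a)*q1^3 := by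
    rw [show (fun t : ℝ => p1^2 + p2^2 - 3 * b * p2 * t^2
        + 2 * a * (t^4 - 12 * t^2 * q2^2 - 32 * q2^4))
      = (fun t : ℝ => (p1^2 + p2^2 - 64*a*q2^4) + 0*t^1 + (-3*b*p2 - 24*a*q2^2)*t^2 + 0*t^3
          + (2*a)*t^4 + 0*t^5 + 0*t^6 + 0*t^7 + 0*t^8) from funext fun t => by ring, dp]
    ring
  -- ∂H/∂q2
  have h2 : deriv (fun t : ℝ => p1^2 + p2^2 - 3 * b * p2 * q1^2
      + 2 * a * (q1^4 - 12 * q1^2 * t^2 - 32 * t^4)) q2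
      = 2*(-24*a*q1^2)*q2 + 4*(-64*a)*q2^3 := by
    rw [show (fun t : ℝ => p1^2 + p2^2 - 3 * b * p2 * q1^2
        + 2 * a * (q1^4 - 12 * q1^2 * t^2 - 32 * t^4))
      = (fun t : ℝ => (p1^2 + p2^2 - 3*b*p2*q1^2 + 2*a*q1^4) + 0*t^1 + (-24*a*q1^2)*t^2 + 0*t^3
          + (-64*a)*t^4 + 0*t^5 + 0*t^6 + 0*t^7 + 0*t^8) from funext fun t => by ring, dp]
    ring
  -- ∂H/∂p1
  have h3 : deriv (fun t : ℝ => t^2 + p2^2 - 3 * b * p2 * q1^2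
      + 2 * a * (q1^4 - 12 * q1^2 * q2^2 - 32 * q2^4)) p1 = 2*p1 := by
    rw [show (fun t : ℝ => t^2 + p2^2 - 3 * b * p2 * q1^2
        + 2 * a * (q1^4 - 12 * q1^2 * q2^2 - 32 * q2^4))
      = (fun t : ℝ => (p2^2 - 3*b*p2*q1^2 + 2*a*(q1^4 - 12*q1^2*q2^2 - 32*q2^4)) + 0*t^1 + 1*t^2
          + 0*t^3 + 0*t^4 + 0*t^5 + 0*t^6 + 0*t^7 + 0*t^8) from funext fun t => by ring, dp]
    ring
  -- ∂H/∂p2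
  have h4 : deriv (fun t : ℝ => p1^2 + t^2 - 3 * b * t * q1^2
      + 2 * a * (q1^4 - 12 * q1^2 * q2^2 - 32 * q2^4)) p2 = 2*p2 - 3*b*q1^2 := by
    rw [show (fun t : ℝ => p1^2 + t^2 - 3 * b * t * q1^2
        + 2 * a * (q1^4 - 12 * q1^2 * q2^2 - 32 * q2^4))
      = (fun t : ℝ => (p1^2 + 2*a*(q1^4 - 12*q1^2*q2^2 - 32*q2^4)) + (-3*b*q1^2)*t^1 + 1*t^2
          + 0*t^3 + 0*t^4 + 0*t^5 + 0*t^6 + 0*t^7 + 0*t^8) from funext fun t => by ring, dp]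
    ring
  -- ∂G/∂q1
  have g1 : deriv (fun t : ℝ => p1^4 + 4 * a^2 * t^4 * (t^4 - 8 * t^2 * q2^2 - 112 * q2^4)
      + 4 * a * b * t^3 * (64 * p1 * q2^3 - p2 * t^3 - 12 * p2 * t * q2^2)
      + a * t^2 * (4 * p1^2 * t^2 - 48 * p1^2 * q2^2 + 32 * p1 * p2 * t * q2 + p2^2 * t^2)
      - 6 * b * p1^2 * p2 * t^2) q1
      = 2*(-48*a*p1^2*q2^2 - 6*b*p1^2*p2)*q1 + 3*(256*a*b*p1*q2^3 + 32*a*p1*p2*q2)*q1^2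
        + 4*(-448*a^2*q2^4 - 48*a*b*p2*q2^2 + 4*a*p1^2 + a*p2^2)*q1^3
        + 6*(-32*a^2*q2^2 - 4*a*b*p2)*q1^5 + 8*(4*a^2)*q1^7 := by
    rw [show (fun t : ℝ => p1^4 + 4 * a^2 * t^4 * (t^4 - 8 * t^2 * q2^2 - 112 * q2^4)
        + 4 * a * b * t^3 * (64 * p1 * q2^3 - p2 * t^3 - 12 * p2 * t * q2^2)
        + a * t^2 * (4 * p1^2 * t^2 - 48 * p1^2 * q2^2 + 32 * p1 * p2 * t * q2 + p2^2 * t^2)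
        - 6 * b * p1^2 * p2 * t^2)
      = (fun t : ℝ => (p1^4) + 0*t^1 + (-48*a*p1^2*q2^2 - 6*b*p1^2*p2)*t^2
          + (256*a*b*p1*q2^3 + 32*a*p1*p2*q2)*t^3
          + (-448*a^2*q2^4 - 48*a*b*p2*q2^2 + 4*a*p1^2 + a*p2^2)*t^4 + 0*t^5
          + (-32*a^2*q2^2 - 4*a*b*p2)*t^6 + 0*t^7 + (4*a^2)*t^8) from funext fun t => by ring, dp]
    ring
  -- ∂G/∂q2
  have g2 : deriv (fun t : ℝ => p1^4 + 4 * a^2 * q1^4 * (q1^4 - 8 * q1^2 * t^2 - 112 * t^4)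
      + 4 * a * b * q1^3 * (64 * p1 * t^3 - p2 * q1^3 - 12 * p2 * q1 * t^2)
      + a * q1^2 * (4 * p1^2 * q1^2 - 48 * p1^2 * t^2 + 32 * p1 * p2 * q1 * t + p2^2 * q1^2)
      - 6 * b * p1^2 * p2 * q1^2) q2
      = (32*a*q1^3*p1*p2) + 2*(-32*a^2*q1^6 - 48*a*b*q1^4*p2 - 48*a*q1^2*p1^2)*q2
        + 3*(256*a*b*q1^3*p1)*q2^2 + 4*(-448*a^2*q1^4)*q2^3 := by
    rw [show (fun t : ℝ => p1^4 + 4 * a^2 * q1^4 * (q1^4 - 8 * q1^2 * t^2 - 112 * t^4)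
        + 4 * a * b * q1^3 * (64 * p1 * t^3 - p2 * q1^3 - 12 * p2 * q1 * t^2)
        + a * q1^2 * (4 * p1^2 * q1^2 - 48 * p1^2 * t^2 + 32 * p1 * p2 * q1 * t + p2^2 * q1^2)
        - 6 * b * p1^2 * p2 * q1^2)
      = (fun t : ℝ => (p1^4 + 4*a^2*q1^8 - 4*a*b*q1^6*p2 + 4*a*q1^4*p1^2 + a*q1^4*p2^2
            - 6*b*p1^2*p2*q1^2) + (32*a*q1^3*p1*p2)*t^1
          + (-32*a^2*q1^6 - 48*a*b*q1^4*p2 - 48*a*q1^2*p1^2)*t^2 + (256*a*b*q1^3*p1)*t^3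
          + (-448*a^2*q1^4)*t^4 + 0*t^5 + 0*t^6 + 0*t^7 + 0*t^8) from funext fun t => by ring, dp]
    ring
  -- ∂G/∂p1
  have g3 : deriv (fun t : ℝ => t^4 + 4 * a^2 * q1^4 * (q1^4 - 8 * q1^2 * q2^2 - 112 * q2^4)
      + 4 * a * b * q1^3 * (64 * t * q2^3 - p2 * q1^3 - 12 * p2 * q1 * q2^2)
      + a * q1^2 * (4 * t^2 * q1^2 - 48 * t^2 * q2^2 + 32 * t * p2 * q1 * q2 + p2^2 * q1^2)
      - 6 * b * t^2 * p2 * q1^2) p1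
      = (256*a*b*q1^3*q2^3 + 32*a*q1^3*p2*q2)
        + 2*(4*a*q1^4 - 48*a*q1^2*q2^2 - 6*b*p2*q1^2)*p1 + 4*p1^3 := by
    rw [show (fun t : ℝ => t^4 + 4 * a^2 * q1^4 * (q1^4 - 8 * q1^2 * q2^2 - 112 * q2^4)
        + 4 * a * b * q1^3 * (64 * t * q2^3 - p2 * q1^3 - 12 * p2 * q1 * q2^2)
        + a * q1^2 * (4 * t^2 * q1^2 - 48 * t^2 * q2^2 + 32 * t * p2 * q1 * q2 + p2^2 * q1^2)
        - 6 * b * t^2 * p2 * q1^2)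
      = (fun t : ℝ => (4*a^2*q1^4*(q1^4 - 8*q1^2*q2^2 - 112*q2^4)
            + 4*a*b*q1^3*(-p2*q1^3 - 12*p2*q1*q2^2) + a*q1^2*p2^2*q1^2)
          + (256*a*b*q1^3*q2^3 + 32*a*q1^3*p2*q2)*t^1
          + (4*a*q1^4 - 48*a*q1^2*q2^2 - 6*b*p2*q1^2)*t^2 + 0*t^3 + 1*t^4
          + 0*t^5 + 0*t^6 + 0*t^7 + 0*t^8) from funext fun t => by ring, dp]
    ring
  -- ∂G/∂p2
  have g4 : deriv (fun t : ℝ => p1^4 + 4 * a^2 * q1^4 * (q1^4 - 8 * q1^2 * q2^2 - 112 * q2^4)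
      + 4 * a * b * q1^3 * (64 * p1 * q2^3 - t * q1^3 - 12 * t * q1 * q2^2)
      + a * q1^2 * (4 * p1^2 * q1^2 - 48 * p1^2 * q2^2 + 32 * p1 * t * q1 * q2 + t^2 * q1^2)
      - 6 * b * p1^2 * t * q1^2) p2
      = (-4*a*b*q1^6 - 48*a*b*q1^4*q2^2 + 32*a*q1^3*p1*q2 - 6*b*p1^2*q1^2)
        + 2*(a*q1^4)*p2 := by
    rw [show (fun t : ℝ => p1^4 + 4 * a^2 * q1^4 * (q1^4 - 8 * q1^2 * q2^2 - 112 * q2^4)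
        + 4 * a * b * q1^3 * (64 * p1 * q2^3 - t * q1^3 - 12 * t * q1 * q2^2)
        + a * q1^2 * (4 * p1^2 * q1^2 - 48 * p1^2 * q2^2 + 32 * p1 * t * q1 * q2 + t^2 * q1^2)
        - 6 * b * p1^2 * t * q1^2)
      = (fun t : ℝ => (p1^4 + 4*a^2*q1^4*(q1^4 - 8*q1^2*q2^2 - 112*q2^4)
            + 256*a*b*q1^3*p1*q2^3 + a*q1^2*(4*p1^2*q1^2 - 48*p1^2*q2^2))
          + (-4*a*b*q1^6 - 48*a*b*q1^4*q2^2 + 32*a*q1^3*p1*q2 - 6*b*p1^2*q1^2)*t^1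
          + (a*q1^4)*t^2 + 0*t^3 + 0*t^4 + 0*t^5 + 0*t^6 + 0*t^7 + 0*t^8)
        from funext fun t => by ring, dp]
    ring
  rw [h1, h2, h3, h4, g1, g2, g3, g4]
  linear_combination (-288*a*p2*q2*q1^6 - 1536*a*p2*q2^3*q1^4 + 72*p1*p2^2*q1^3
    + 2304*a*p1*q2^2*q1^5) * hb
end

section
/- For (q1, q2, p1, p2) with q1 ≠ 0, define u1 = q2 + sqrt(q1^2 + q2^2), u2 = q2 - sqrt(q1^2 + q2^2) and p_{u_i} = p2/2 + p1*q1/(2*u_i) for i = 1, 2. Then for each i the separated relation p_{u_i}^2 - a*u_i^3 = H1/4 - H2/u_i holds, where H1 = p1^2 + p2^2 - 16*a*q2*(q1^2 + 2*q2^2) and H2 = a*q1^2*(q1^2 + 4*q2^2) + p1*(q2*p1 - q1*p2)/2. -/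
/-!
Both `u = q₂ ± √(q₁² + q₂²)` are roots of `λ² - 2 q₂ λ - q₁²`, and they are nonzero because
`0` is a root only when `q₁ = 0`. For any nonzero root `u`, the relation `u² = 2 q₂ u + q₁²` turns
`p_u² - a u³ - H₁/4 + H₂/u` into zero: eliminating `q₁²` cancels the momentum terms, and the
potential terms reduce to `u⁴ = 4 q₂ u (q₁² + 2 q₂²) + q₁² (q₁² + 4 q₂²)`, which follows by squaring
the root relation.
-/

namespace HenonHeiles

def H1 (a q1 q2 p1 p2 : ℝ) : ℝ := p1 ^ 2 + p2 ^ 2 - 16 * a * q2 * (q1 ^ 2 + 2 * q2 ^ 2)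

noncomputable def H2 (a q1 q2 p1 p2 : ℝ) : ℝ := a * q1 ^ 2 * (q1 ^ 2 + 4 * q2 ^ 2) + p1 * (q2 * p1 - q1 * p2) / 2

noncomputable def parabolicMomentum (q1 p1 p2 u : ℝ) : ℝ := p2 / 2 + p1 * q1 / (2 * u)

theorem parabolic_root_ne_zero {q1 q2 u : ℝ} (hq : q1 ≠ 0) (hroot : u ^ 2 = 2 * q2 * u + q1 ^ 2) :
    u ≠ 0 := by
  rintro rfl
  exact hq (by simpa [eq_comm] using hroot)

theorem parabolic_root_of_sq_eq {q1 q2 s : ℝ} (hs : s ^ 2 = q1 ^ 2 + q2 ^ 2) :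
    (q2 + s) ^ 2 = 2 * q2 * (q2 + s) + q1 ^ 2 ∧ (q2 - s) ^ 2 = 2 * q2 * (q2 - s) + q1 ^ 2 :=
  ⟨by linear_combination hs, by linear_combination hs⟩

theorem separated_relation {a q1 q2 p1 p2 u : ℝ} (hu : u ≠ 0)
    (hroot : u ^ 2 = 2 * q2 * u + q1 ^ 2) :
    parabolicMomentum q1 p1 p2 u ^ 2 - a * u ^ 3 =
      H1 a q1 q2 p1 p2 / 4 - H2 a q1 q2 p1 p2 / u := by
  unfold parabolicMomentum H1 H2
  field_simp
  linear_combination (-4 * p1 ^ 2 - 16 * a * u * (u ^ 2 + 2 * q2 * u + q1 ^ 2 + 4 * q2 ^ 2)) * hroot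

end HenonHeiles

open HenonHeiles in
theorem henon_heiles_separated_relations (a q1 q2 p1 p2 : ℝ) (hq : q1 ≠ 0) :
    let u1 := q2 + Real.sqrt (q1^2 + q2^2)
    let u2 := q2 - Real.sqrt (q1^2 + q2^2)
    let pu1 := p2 / 2 + p1 * q1 / (2 * u1)
    let pu2 := p2 / 2 + p1 * q1 / (2 * u2)
    let H1 := p1^2 + p2^2 - 16 * a * q2 * (q1^2 + 2 * q2^2)
    let H2 := a * q1^2 * (q1^2 + 4 * q2^2) + p1 * (q2 * p1 - q1 * p2) / 2
    pu1^2 - a * u1^3 = H1 / 4 - H2 / u1 ∧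
    pu2^2 - a * u2^3 = H1 / 4 - H2 / u2 := by
  intro u1 u2 pu1 pu2 H1 H2
  have hs : Real.sqrt (q1 ^ 2 + q2 ^ 2) ^ 2 = q1 ^ 2 + q2 ^ 2 := Real.sq_sqrt (by positivity)
  obtain ⟨hroot1, hroot2⟩ := parabolic_root_of_sq_eq hs
  exact ⟨separated_relation (parabolic_root_ne_zero hq hroot1) hroot1,
    separated_relation (parabolic_root_ne_zero hq hroot2) hroot2⟩
end
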